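/- Let λ > 0, let n_e : ℝ → ℝ be continuously differentiable with n_e'(s) > 0 for all s ∈ ℝ, let φ : [0,1] → ℝ be continuous, and let ρ : [0,1] → ℝ be Lebesgue integrable. Suppose W : [0,1] → ℝ is continuously differentiable with W(0) = W(1) = 0, and W' is absolutely continuous with a.e. derivative W'' ∈ L¹(0,1) satisfying −λ² W''(x) + n_e(φ(x) + W(x)) − n_e(φ(x)) = ρ(x) for a.e. x ∈ (0,1). Then ∫₀¹ |n_e(φ(x) + W(x)) − n_e(φ(x))| dx ≤ ∫₀¹ |ρ(x)| dx, λ² ∫₀¹ |W''(x)| dx ≤ 2 ∫₀¹ |ρ(x)| dx, and λ² sup_{x ∈ [0,1]} |W'(x)| ≤ 2 ∫₀¹ |ρ(x)| dx. -/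

import Mathlib

/-!
Testing the equation against `sign W` is Kato's inequality: `n_e(φ + W) - n_e(φ)` has the sign
of `W` because `n_e` is increasing, while `∫ W'' sign W ≤ 0`. To make this rigorous one tests
against `ψₙ(W) = (2/π) arctan (n W)`: integration by parts with `W(0) = W(1) = 0` gives
`∫ W'' ψₙ(W) = -∫ ψₙ'(W) W'² ≤ 0`, so `∫ (n_e(φ + W) - n_e(φ)) ψₙ(W) ≤ ∫ |ρ|`, and dominated
convergence gives the first estimate. The second follows from the equation and the triangle
inequality. For the third, `W'` vanishes somewhere by Rolle's theorem, so `|W'| ≤ ∫ |W''|`.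
-/

open MeasureTheory Set Filter Topology Real

theorem absolutelyContinuousOnInterval_of_hasDerivWithinAt {a b : ℝ} (hab : a ≤ b)
    {f f' : ℝ → ℝ} (hf : ∀ x ∈ Icc a b, HasDerivWithinAt f (f' x) (Icc a b) x)
    (hf' : ContinuousOn f' (Icc a b)) : AbsolutelyContinuousOnInterval f a b := by
  obtain ⟨C, hC⟩ := isCompact_Icc.exists_bound_of_continuousOn hf'
  have hlip : LipschitzOnWith C.toNNReal f (Icc a b) :=
    (convex_Icc a b).lipschitzOnWith_of_nnnorm_hasDerivWithin_le hf fun x hx => by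
      rw [← NNReal.coe_le_coe, coe_nnnorm, Real.coe_toNNReal']
      exact (hC x hx).trans (le_max_left _ _)
  rw [← uIcc_of_le hab] at hlip
  exact hlip.absolutelyContinuousOnInterval

theorem integral_mul_eq_neg_integral_deriv_mul {a b : ℝ} {u' u'' v : ℝ → ℝ}
    (hu'' : IntervalIntegrable u'' volume a b)
    (hu' : ∀ x ∈ uIcc a b, u' x = u' a + ∫ t in a..x, u'' t)
    (hv : AbsolutelyContinuousOnInterval v a b) (hva : v a = 0) (hvb : v b = 0) :
    ∫ x in a..b, u'' x * v x = -∫ x in a..b, deriv v x * u' x := by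
  set G : ℝ → ℝ := fun x => u' a + ∫ t in a..x, u'' t
  have hG : AbsolutelyContinuousOnInterval G a b :=
    (contDiffOn_const (c := u' a)).absolutelyContinuousOnInterval.add
      (hu''.absolutelyContinuousOnInterval_intervalIntegral left_mem_uIcc)
  have hderiv : ∀ᵐ x, x ∈ uIoc a b → u'' x * v x = v x * deriv G x := by
    filter_upwards [hu''.ae_hasDerivAt_integral] with x hx hxab
    rw [((hx (uIoc_subset_uIcc hxab) a left_mem_uIcc).const_add (u' a)).deriv, mul_comm]
  rw [intervalIntegral.integral_congr_ae hderiv, hv.integral_mul_deriv_eq_deriv_mul hG, hva, hvb,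
    intervalIntegral.integral_congr (g := fun x => deriv v x * u' x) fun x hx => by
      simp only [G, ← hu' x hx]]
  simp

theorem integral_mul_comp_nonpos {a b : ℝ} (hab : a ≤ b) {u u' u'' ψ ψ' : ℝ → ℝ}
    (hu : ∀ x ∈ Icc a b, HasDerivWithinAt u (u' x) (Icc a b) x)
    (hu'cont : ContinuousOn u' (Icc a b)) (hu'' : IntervalIntegrable u'' volume a b)
    (hu' : ∀ x ∈ Icc a b, u' x = u' a + ∫ t in a..x, u'' t) (hua : u a = 0) (hub : u b = 0)
    (hψ : ∀ s, HasDerivAt ψ (ψ' s) s) (hψ'cont : Continuous ψ') (hψ'_nonneg : ∀ s, 0 ≤ ψ' s)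
    (hψ0 : ψ 0 = 0) :
    ∫ x in a..b, u'' x * ψ (u x) ≤ 0 := by
  have hv : ∀ x ∈ Icc a b, HasDerivWithinAt (ψ ∘ u) (ψ' (u x) * u' x) (Icc a b) x :=
    fun x hx => (hψ (u x)).comp_hasDerivWithinAt x (hu x hx)
  have hv' : ContinuousOn (fun x => ψ' (u x) * u' x) (Icc a b) :=
    (hψ'cont.comp_continuousOn fun x hx => (hu x hx).continuousWithinAt).mul hu'cont
  rw [← uIcc_of_le hab] at hu'
  have hibp : ∫ x in a..b, u'' x * ψ (u x) = -∫ x in a..b, deriv (ψ ∘ u) x * u' x :=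
    integral_mul_eq_neg_integral_deriv_mul hu'' hu'
      (absolutelyContinuousOnInterval_of_hasDerivWithinAt hab hv hv')
      (by simp [hua, hψ0]) (by simp [hub, hψ0])
  rw [hibp, neg_nonpos]
  refine intervalIntegral.integral_nonneg_of_ae_restrict hab ?_
  rw [← Measure.restrict_congr_set Ioo_ae_eq_Icc]
  filter_upwards [ae_restrict_mem measurableSet_Ioo] with x hx
  rw [((hv x (Ioo_subset_Icc_self hx)).hasDerivAt (Icc_mem_nhds hx.1 hx.2)).deriv, mul_assoc]
  exact mul_nonneg (hψ'_nonneg _) (mul_self_nonneg _)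

theorem StrictMono.sign_sub {f : ℝ → ℝ} (hf : StrictMono f) (x y : ℝ) :
    SignType.sign (f x - f y) = SignType.sign (x - y) := by
  rcases lt_trichotomy x y with h | rfl | h
  · rw [sign_neg (sub_neg.2 (hf h)), sign_neg (sub_neg.2 h)]
  · simp
  · rw [sign_pos (sub_pos.2 (hf h)), sign_pos (sub_pos.2 h)]

noncomputable def signApprox (n : ℕ) (s : ℝ) : ℝ := 2 / π * arctan (n * s)

theorem continuous_signApprox (n : ℕ) : Continuous (signApprox n) := by
  unfold signApprox; fun_prop

theorem signApprox_zero_right (n : ℕ) : signApprox n 0 = 0 := by simp [signApprox]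

theorem abs_signApprox_le_one (n : ℕ) (s : ℝ) : |signApprox n s| ≤ 1 := by
  have h : |arctan (n * s)| ≤ π / 2 :=
    abs_le.2 ⟨(neg_pi_div_two_lt_arctan _).le, (arctan_lt_pi_div_two _).le⟩
  rw [signApprox, abs_mul, abs_of_pos (by positivity : (0:ℝ) < 2 / π)]
  calc 2 / π * |arctan (n * s)| ≤ 2 / π * (π / 2) := by gcongr
    _ = 1 := by field_simp

theorem hasDerivAt_signApprox (n : ℕ) (s : ℝ) :
    HasDerivAt (signApprox n) (2 / π * (n / (1 + (n * s) ^ 2))) s := by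
  refine ((((hasDerivAt_id' s).const_mul (n : ℝ)).arctan).const_mul (2 / π)).congr_deriv ?_
  field_simp

theorem continuous_deriv_signApprox (n : ℕ) :
    Continuous fun s : ℝ => 2 / π * (n / (1 + (n * s) ^ 2)) :=
  continuous_const.mul (continuous_const.div (by fun_prop) fun s => by positivity)

theorem tendsto_signApprox (s : ℝ) :
    Tendsto (fun n => signApprox n s) atTop (𝓝 (SignType.sign s : ℝ)) := by
  rcases lt_trichotomy s 0 with hs | rfl | hs
  · have h : Tendsto (fun n : ℕ => arctan (n * s)) atTop (𝓝 (-(π / 2))) :=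
      (tendsto_nhds_of_tendsto_nhdsWithin tendsto_arctan_atBot).comp
        (tendsto_natCast_atTop_atTop.atTop_mul_const_of_neg hs)
    have hlim : (SignType.sign s : ℝ) = 2 / π * -(π / 2) := by
      rw [sign_neg hs]; field_simp; norm_num
    exact hlim ▸ h.const_mul (2 / π)
  · simp [signApprox]
  · have h : Tendsto (fun n : ℕ => arctan (n * s)) atTop (𝓝 (π / 2)) :=
      (tendsto_nhds_of_tendsto_nhdsWithin tendsto_arctan_atTop).comp
        (tendsto_natCast_atTop_atTop.atTop_mul_const hs)
    have hlim : (SignType.sign s : ℝ) = 2 / π * (π / 2) := by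
      rw [sign_pos hs]; field_simp; norm_num
    exact hlim ▸ h.const_mul (2 / π)

theorem integral_abs_le_of_tendsto_sign {α : Type*} [MeasurableSpace α] {μ : Measure α}
    {g : α → ℝ} {v : ℕ → α → ℝ} {C : ℝ} (hg : Integrable g μ)
    (hv : ∀ n, AEStronglyMeasurable (v n) μ) (hv_le : ∀ n x, |v n x| ≤ 1)
    (hv_lim : ∀ᵐ x ∂μ, Tendsto (fun n => v n x) atTop (𝓝 (SignType.sign (g x) : ℝ)))
    (hC : ∀ n, ∫ x, g x * v n x ∂μ ≤ C) :
    ∫ x, |g x| ∂μ ≤ C := by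
  refine le_of_tendsto (tendsto_integral_of_dominated_convergence
    (F := fun n x => g x * v n x) (fun x => |g x|)
    (fun n => hg.aestronglyMeasurable.mul (hv n)) hg.abs
    (fun n => ae_of_all _ fun x => ?_) ?_) (Eventually.of_forall hC)
  · rw [Real.norm_eq_abs, abs_mul]
    exact mul_le_of_le_one_right (abs_nonneg _) (hv_le n x)
  · filter_upwards [hv_lim] with x hx
    simpa only [self_mul_sign] using hx.const_mul (g x)

theorem integral_abs_le_of_eq_add_mul_second_deriv {a b : ℝ} (hab : a ≤ b)
    {u u' u'' g ρ : ℝ → ℝ} {c : ℝ} (hc : 0 ≤ c)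
    (hu : ∀ x ∈ Icc a b, HasDerivWithinAt u (u' x) (Icc a b) x)
    (hu'cont : ContinuousOn u' (Icc a b)) (hu'' : IntervalIntegrable u'' volume a b)
    (hu' : ∀ x ∈ Icc a b, u' x = u' a + ∫ t in a..x, u'' t) (hua : u a = 0) (hub : u b = 0)
    (hρ : IntervalIntegrable ρ volume a b)
    (hg_sign : ∀ x, SignType.sign (g x) = SignType.sign (u x))
    (heq : ∀ᵐ x ∂volume.restrict (Ioc a b), g x = ρ x + c * u'' x) :
    ∫ x in a..b, |g x| ≤ ∫ x in a..b, |ρ x| := by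
  set v : ℕ → ℝ → ℝ := fun n x => signApprox n (u x)
  have hkato (n : ℕ) : ∫ x in a..b, u'' x * v n x ≤ 0 :=
    integral_mul_comp_nonpos (ψ := signApprox n) hab hu hu'cont hu'' hu' hua hub
      (hasDerivAt_signApprox n) (continuous_deriv_signApprox n) (fun s => by positivity)
      (signApprox_zero_right n)
  simp only [intervalIntegral.integral_of_le hab] at hkato ⊢
  rw [intervalIntegrable_iff_integrableOn_Ioc_of_le hab] at hρ hu''
  have hg : IntegrableOn g (Ioc a b) :=
    (hρ.add (hu''.const_mul c)).congr (heq.mono fun x hx => hx.symm)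
  have hv_meas (n : ℕ) : AEStronglyMeasurable (v n) (volume.restrict (Ioc a b)) :=
    (((continuous_signApprox n).comp_continuousOn fun x hx => (hu x hx).continuousWithinAt).mono
      Ioc_subset_Icc_self).aestronglyMeasurable measurableSet_Ioc
  have hv_le (n : ℕ) (x : ℝ) : |v n x| ≤ 1 := abs_signApprox_le_one n (u x)
  have hv_bound (n : ℕ) : ∀ᵐ x ∂volume.restrict (Ioc a b), ‖v n x‖ ≤ 1 :=
    ae_of_all _ (hv_le n)
  refine integral_abs_le_of_tendsto_sign hg hv_meas hv_le
    (ae_of_all _ fun x => hg_sign x ▸ tendsto_signApprox (u x)) fun n => ?_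
  calc ∫ x in Ioc a b, g x * v n x
      = ∫ x in Ioc a b, (ρ x * v n x + c * (u'' x * v n x)) :=
        integral_congr_ae (heq.mono fun x hx => by simp only [hx]; ring)
    _ = (∫ x in Ioc a b, ρ x * v n x) + c * ∫ x in Ioc a b, u'' x * v n x := by
        rw [integral_add (hρ.mul_bdd (hv_meas n) (hv_bound n))
          ((hu''.mul_bdd (hv_meas n) (hv_bound n)).const_mul c), integral_const_mul]
    _ ≤ (∫ x in Ioc a b, |ρ x|) + c * 0 := by
        gcongr ?_ + ?_
        · refine integral_mono (hρ.mul_bdd (hv_meas n) (hv_bound n)) hρ.abs fun x => ?_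
          calc ρ x * v n x ≤ |ρ x| * |v n x| := abs_mul (ρ x) (v n x) ▸ le_abs_self _
            _ ≤ |ρ x| := mul_le_of_le_one_right (abs_nonneg _) (hv_le n x)
        · exact mul_le_mul_of_nonneg_left (hkato n) hc
    _ = ∫ x in Ioc a b, |ρ x| := by rw [mul_zero, add_zero]

theorem mul_integral_abs_le_of_eq_add_mul {a b : ℝ} (hab : a ≤ b) {g ρ w : ℝ → ℝ} {c : ℝ}
    (hc : 0 ≤ c) (hρ : IntervalIntegrable ρ volume a b) (hw : IntervalIntegrable w volume a b)
    (heq : ∀ᵐ x ∂volume.restrict (Ioc a b), g x = ρ x + c * w x) :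
    c * ∫ x in a..b, |w x| ≤ (∫ x in a..b, |g x|) + ∫ x in a..b, |ρ x| := by
  rw [intervalIntegrable_iff_integrableOn_Ioc_of_le hab] at hρ hw
  have hg : IntegrableOn g (Ioc a b) :=
    (hρ.add (hw.const_mul c)).congr (heq.mono fun x hx => hx.symm)
  simp only [intervalIntegral.integral_of_le hab]
  rw [← integral_const_mul, ← integral_add hg.abs hρ.abs]
  refine integral_mono_ae (hw.abs.const_mul c) (hg.abs.add hρ.abs) ?_
  filter_upwards [heq] with x hx
  calc c * |w x| = |g x - ρ x| := by rw [hx, add_sub_cancel_left, abs_mul, abs_of_nonneg hc]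
    _ ≤ |g x| + |ρ x| := abs_sub _ _

theorem abs_le_integral_abs_second_deriv {a b : ℝ} (hab : a < b) {u u' u'' : ℝ → ℝ}
    (hu : ∀ x ∈ Icc a b, HasDerivWithinAt u (u' x) (Icc a b) x)
    (hu'' : IntervalIntegrable u'' volume a b)
    (hu' : ∀ x ∈ Icc a b, u' x = u' a + ∫ t in a..x, u'' t) (hua : u a = u b) :
    ∀ x ∈ Icc a b, |u' x| ≤ ∫ t in a..b, |u'' t| := by
  obtain ⟨c, hc, hc0⟩ := exists_hasDerivAt_eq_zero hab (fun x hx => (hu x hx).continuousWithinAt)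
    hua fun x hx => (hu x (Ioo_subset_Icc_self hx)).hasDerivAt (Icc_mem_nhds hx.1 hx.2)
  intro x hx
  have hc' : c ∈ Icc a b := Ioo_subset_Icc_self hc
  have hcx : u' x = ∫ t in c..x, u'' t := by
    have hint (y : ℝ) (hy : y ∈ Icc a b) : IntervalIntegrable u'' volume a y :=
      hu''.mono_set (uIcc_subset_uIcc left_mem_uIcc (Icc_subset_uIcc hy))
    have := intervalIntegral.integral_interval_sub_left (hint x hx) (hint c hc')
    linarith [hu' x hx, hu' c hc']
  have hsub : uIoc c x ⊆ Ioc a b := Ioc_subset_Ioc (le_min hc.1.le hx.1) (max_le hc.2.le hx.2)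
  calc |u' x| ≤ ∫ t in uIoc c x, |u'' t| := by
        simpa only [hcx, Real.norm_eq_abs] using
          intervalIntegral.norm_integral_le_integral_norm_uIoc (f := u'') (a := c) (b := x)
    _ ≤ ∫ t in Ioc a b, |u'' t| := setIntegral_mono_set
        ((intervalIntegrable_iff_integrableOn_Ioc_of_le hab.le).1 hu'').abs
        (ae_of_all _ fun t => abs_nonneg _) hsub.eventuallyLE
    _ = ∫ t in a..b, |u'' t| := (intervalIntegral.integral_of_le hab.le).symm

theorem nonlinear_poisson_L1_W1inf_estimates_general (lam : ℝ)
    (ne : ℝ → ℝ) (hne' : ∀ s : ℝ, 0 < deriv ne s)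
    (phi : ℝ → ℝ)
    (ρ : ℝ → ℝ) (hρ : IntegrableOn ρ (Icc 0 1))
    (W W' W'' : ℝ → ℝ)
    (hW : ∀ x ∈ Icc (0:ℝ) 1, HasDerivWithinAt W (W' x) (Icc 0 1) x)
    (hW'cont : ContinuousOn W' (Icc 0 1))
    (hW''int : IntegrableOn W'' (Icc 0 1))
    (hAC : ∀ x ∈ Icc (0:ℝ) 1, W' x = W' 0 + ∫ t in (0:ℝ)..x, W'' t)
    (hb0 : W 0 = 0) (hb1 : W 1 = 0)
    (heq : ∀ᵐ x ∂(volume.restrict (Ioo (0:ℝ) 1)),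
      -lam ^ 2 * W'' x + ne (phi x + W x) - ne (phi x) = ρ x) :
    (∫ x in (0:ℝ)..1, |ne (phi x + W x) - ne (phi x)|) ≤ (∫ x in (0:ℝ)..1, |ρ x|) ∧
    lam ^ 2 * ∫ x in (0:ℝ)..1, |W'' x| ≤ 2 * ∫ x in (0:ℝ)..1, |ρ x| ∧
    ∀ x ∈ Icc (0:ℝ) 1, lam ^ 2 * |W' x| ≤ 2 * ∫ x in (0:ℝ)..1, |ρ x| := by
  have hρ' := (intervalIntegrable_iff_integrableOn_Icc_of_le zero_le_one).2 hρ
  have hW'' := (intervalIntegrable_iff_integrableOn_Icc_of_le zero_le_one).2 hW''int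
  have heq' : ∀ᵐ x ∂volume.restrict (Ioc (0:ℝ) 1),
      ne (phi x + W x) - ne (phi x) = ρ x + lam ^ 2 * W'' x := by
    rw [← Measure.restrict_congr_set Ioo_ae_eq_Ioc]
    filter_upwards [heq] with x hx
    linarith
  have hsign (x : ℝ) : SignType.sign (ne (phi x + W x) - ne (phi x)) = SignType.sign (W x) := by
    simpa using (strictMono_of_deriv_pos hne').sign_sub (phi x + W x) (phi x)
  have hL1 := integral_abs_le_of_eq_add_mul_second_deriv zero_le_one (sq_nonneg lam) hW hW'cont
    hW'' hAC hb0 hb1 hρ' hsign heq'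
  have hL1W'' : lam ^ 2 * ∫ x in (0:ℝ)..1, |W'' x| ≤ 2 * ∫ x in (0:ℝ)..1, |ρ x| := by
    linarith [mul_integral_abs_le_of_eq_add_mul zero_le_one (sq_nonneg lam) hρ' hW'' heq']
  refine ⟨hL1, hL1W'', fun x hx => le_trans ?_ hL1W''⟩
  exact mul_le_mul_of_nonneg_left
    (abs_le_integral_abs_second_deriv zero_lt_one hW hW'' hAC (hb0.trans hb1.symm) x hx)
    (sq_nonneg lam)

/-- `L¹` and `W^{1,∞}` estimates for a strong solution `W ∈ W^{2,1}(0,1)` of the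
nonlinear Poisson problem `-λ² W'' + n_e(φ + W) - n_e(φ) = ρ` with homogeneous
Dirichlet boundary conditions:
`∫ |n_e(φ+W) - n_e(φ)| ≤ ∫ |ρ|`, `λ² ∫ |W''| ≤ 2 ∫ |ρ|` and `λ² sup |W'| ≤ 2 ∫ |ρ|`. -/
theorem nonlinear_poisson_L1_W1inf_estimates (lam : ℝ) (hlam : 0 < lam)
    (ne : ℝ → ℝ) (hne : ContDiff ℝ 1 ne) (hne' : ∀ s : ℝ, 0 < deriv ne s)
    (phi : ℝ → ℝ) (hphi : ContinuousOn phi (Icc 0 1))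
    (ρ : ℝ → ℝ) (hρ : IntegrableOn ρ (Icc 0 1))
    (W W' W'' : ℝ → ℝ)
    (hW : ∀ x ∈ Icc (0:ℝ) 1, HasDerivWithinAt W (W' x) (Icc 0 1) x)
    (hW'cont : ContinuousOn W' (Icc 0 1))
    (hW''int : IntegrableOn W'' (Icc 0 1))
    (hAC : ∀ x ∈ Icc (0:ℝ) 1, W' x = W' 0 + ∫ t in (0:ℝ)..x, W'' t)
    (hb0 : W 0 = 0) (hb1 : W 1 = 0)
    (heq : ∀ᵐ x ∂(volume.restrict (Ioo (0:ℝ) 1)),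
      -lam ^ 2 * W'' x + ne (phi x + W x) - ne (phi x) = ρ x) :
    (∫ x in (0:ℝ)..1, |ne (phi x + W x) - ne (phi x)|) ≤ (∫ x in (0:ℝ)..1, |ρ x|) ∧
    lam ^ 2 * ∫ x in (0:ℝ)..1, |W'' x| ≤ 2 * ∫ x in (0:ℝ)..1, |ρ x| ∧
    ∀ x ∈ Icc (0:ℝ) 1, lam ^ 2 * |W' x| ≤ 2 * ∫ x in (0:ℝ)..1, |ρ x| :=
  nonlinear_poisson_L1_W1inf_estimates_general lam ne hne' phi ρ hρ W W' W'' hW hW'cont hW''int hAC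
    hb0 hb1 heq
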